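/- arXiv:1809.10574 — 3 statements merged into one kernel-verified Lean document; each statement's English description precedes it below -/
import Mathlib

section
/- Fix integers m, d ≥ 1 and α ∈ (0,1]. Let X be the set of continuous maps f : ℝ^m → ℝ^d such that [f]_{α,K} < ∞ for every compact set K ⊆ ℝ^m. Then X, endowed with the strong α-Hölder–Whitney topology, is a Baire space. -/
/-!
The nested-set proof of the Baire category theorem, run with strong neighbourhoods. Every open set
contains a strong ball `{g | ∀ t, ‖f - g‖_{α,K_t} < ε_t}` around each of its points; shrinking the
radii and adding the ball of radius `n` with radius `1/n` as one more constraint yields a nonempty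
open set inside a closed strong ball, which is closed even for pointwise convergence because the
Hölder norm is lower semicontinuous. For a nested sequence of such closed balls, the `n`-th
constraint makes the centres uniformly Cauchy on the ball of radius `n`; so they converge locally
uniformly to a continuous map, which is locally Hölder (it is `1/n`-close to the `n`-th centre in
`C^α` of that ball) and, by closedness, lies in every closed ball of the sequence.
-/


open TopologicalSpace Set
open scoped ENNReal

noncomputable section

/-- Euclidean space `ℝ^n`. -/
abbrev Euc (n : ℕ) : Type := EuclideanSpace ℝ (Fin n)

/-- The `α`-Hölder seminorm of `f` over the set `A`, valued in `[0,∞]`: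
`[f]_{α,A} = sup { ‖f x − f y‖ / ‖x − y‖^α : x, y ∈ A, x ≠ y }`. -/
noncomputable def holderSemi {E F : Type*} [NormedAddCommGroup E] [NormedAddCommGroup F]
    (α : ℝ) (A : Set E) (f : E → F) : ℝ≥0∞ :=
  ⨆ (x) (_ : x ∈ A) (y) (_ : y ∈ A) (_ : x ≠ y),
    ENNReal.ofReal (‖f x - f y‖ / ‖x - y‖ ^ α)

/-- The sup-norm `‖f‖_{C⁰(A)} = sup_{x ∈ A} ‖f x‖`, valued in `[0,∞]`. -/
noncomputable def supNormOn {E F : Type*} [NormedAddCommGroup E] [NormedAddCommGroup F]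
    (A : Set E) (f : E → F) : ℝ≥0∞ :=
  ⨆ (x) (_ : x ∈ A), ENNReal.ofReal ‖f x‖

/-- The `α`-Hölder norm `‖f‖_{α,A} = ‖f‖_{C⁰(A)} + [f]_{α,A}`. -/
noncomputable def holderNorm {E F : Type*} [NormedAddCommGroup E] [NormedAddCommGroup F]
    (α : ℝ) (A : Set E) (f : E → F) : ℝ≥0∞ :=
  supNormOn A f + holderSemi α A f

/-- Continuous maps `ℝ^m → ℝ^d` with finite `α`-Hölder seminorm on every compact set. -/
abbrev HolderMap (m d : ℕ) (α : ℝ) : Type :=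
  {f : Euc m → Euc d // Continuous f ∧
    ∀ K : Set (Euc m), IsCompact K → holderSemi α K f < ⊤}

/-- Generating sets `N_s(f; {K_t}, {ε_t})` of the strong `α`-Hölder–Whitney topology:
indexed by a locally finite family of compact sets `K_t` and extended positive reals `ε_t`. -/
def strongBasic (m d : ℕ) (α : ℝ) : Set (Set (HolderMap m d α)) :=
  { S | ∃ (T : Type) (K : T → Set (Euc m)) (ε : T → ℝ≥0∞) (f : HolderMap m d α),
      (∀ t, IsCompact (K t)) ∧ LocallyFinite K ∧ (∀ t, 0 < ε t) ∧
      S = { g | ∀ t, holderNorm α (K t) (f.1 - g.1) < ε t } }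

/-- Generating sets `N(f; K, ε)` of the weak `α`-Hölder–Whitney topology. -/
def weakBasic (m d : ℕ) (α : ℝ) : Set (Set (HolderMap m d α)) :=
  { S | ∃ (f : HolderMap m d α) (K : Set (Euc m)) (ε : ℝ), IsCompact K ∧ 0 < ε ∧
      S = { g | holderNorm α K (f.1 - g.1) < ENNReal.ofReal ε } }


open Filter Metric
open scoped Topology

section HolderNorm

variable {E F : Type*} [NormedAddCommGroup E] [NormedAddCommGroup F] {α : ℝ} {A B : Set E}

lemma le_supNormOn {f : E → F} {x : E} (hx : x ∈ A) :
    ENNReal.ofReal ‖f x‖ ≤ supNormOn A f :=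
  le_iSup₂_of_le x hx le_rfl

lemma edist_le_supNormOn {f g : E → F} {x : E} (hx : x ∈ A) :
    edist (f x) (g x) ≤ supNormOn A (f - g) := by
  rw [edist_dist, dist_eq_norm]
  exact le_supNormOn (f := f - g) hx

lemma le_holderSemi {f : E → F} {x y : E} (hx : x ∈ A) (hy : y ∈ A) (hxy : x ≠ y) :
    ENNReal.ofReal (‖f x - f y‖ / ‖x - y‖ ^ α) ≤ holderSemi α A f :=
  le_iSup₂_of_le x hx <| le_iSup₂_of_le y hy <| le_iSup_of_le hxy le_rfl

lemma supNormOn_le_holderNorm (f : E → F) : supNormOn A f ≤ holderNorm α A f :=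
  le_self_add

lemma holderSemi_le_holderNorm (f : E → F) : holderSemi α A f ≤ holderNorm α A f :=
  le_add_self

@[simp]
lemma holderNorm_zero : holderNorm α A (0 : E → F) = 0 := by
  simp [holderNorm, supNormOn, holderSemi]

lemma holderSemi_mono (hAB : A ⊆ B) (f : E → F) : holderSemi α A f ≤ holderSemi α B f :=
  iSup₂_le fun _ hx => iSup₂_le fun _ hy => iSup_le fun hxy => le_holderSemi (hAB hx) (hAB hy) hxy

lemma holderSemi_neg (f : E → F) : holderSemi α A (-f) = holderSemi α A f := by
  have h (x y : E) : ‖(-f) x - (-f) y‖ = ‖f x - f y‖ := by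
    rw [Pi.neg_apply, Pi.neg_apply, neg_sub_neg, norm_sub_rev]
  simp only [holderSemi, h]

lemma supNormOn_add_le (f g : E → F) : supNormOn A (f + g) ≤ supNormOn A f + supNormOn A g :=
  iSup₂_le fun x hx => calc
    ENNReal.ofReal ‖f x + g x‖ ≤ ENNReal.ofReal ‖f x‖ + ENNReal.ofReal ‖g x‖ := by
      rw [← ENNReal.ofReal_add (norm_nonneg _) (norm_nonneg _)]
      exact ENNReal.ofReal_le_ofReal (norm_add_le _ _)
    _ ≤ supNormOn A f + supNormOn A g := add_le_add (le_supNormOn hx) (le_supNormOn hx)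

lemma holderSemi_add_le (f g : E → F) :
    holderSemi α A (f + g) ≤ holderSemi α A f + holderSemi α A g :=
  iSup₂_le fun x hx => iSup₂_le fun y hy => iSup_le fun hxy => by
    have hpos : 0 < ‖x - y‖ ^ α := Real.rpow_pos_of_pos (norm_sub_pos_iff.2 hxy) _
    calc ENNReal.ofReal (‖(f + g) x - (f + g) y‖ / ‖x - y‖ ^ α)
        ≤ ENNReal.ofReal (‖f x - f y‖ / ‖x - y‖ ^ α + ‖g x - g y‖ / ‖x - y‖ ^ α) := by
          rw [← add_div]
          gcongr
          simpa only [Pi.add_apply, add_sub_add_comm] using norm_add_le _ _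
      _ ≤ holderSemi α A f + holderSemi α A g := by
          rw [ENNReal.ofReal_add (by positivity) (by positivity)]
          exact add_le_add (le_holderSemi hx hy hxy) (le_holderSemi hx hy hxy)

lemma holderSemi_sub_le (f g : E → F) :
    holderSemi α A (f - g) ≤ holderSemi α A f + holderSemi α A g := by
  simpa only [sub_eq_add_neg, holderSemi_neg] using holderSemi_add_le (A := A) (α := α) f (-g)

lemma holderNorm_sub_le_add (f g h : E → F) :
    holderNorm α A (f - h) ≤ holderNorm α A (f - g) + holderNorm α A (g - h) := by
  rw [← sub_add_sub_cancel f g h, holderNorm, holderNorm, holderNorm, add_add_add_comm]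
  exact add_le_add (supNormOn_add_le _ _) (holderSemi_add_le _ _)

lemma lowerSemicontinuous_holderNorm :
    LowerSemicontinuous fun f : E → F => holderNorm α A f := by
  refine LowerSemicontinuous.add (lowerSemicontinuous_biSup fun _ _ => ?_)
    (lowerSemicontinuous_biSup fun _ _ => lowerSemicontinuous_biSup fun _ _ =>
      lowerSemicontinuous_iSup fun _ => ?_)
  all_goals refine Continuous.lowerSemicontinuous (ENNReal.continuous_ofReal.comp ?_)
  · fun_prop
  · fun_prop

lemma isClosed_setOf_holderNorm_le (C : ℝ≥0∞) :
    IsClosed {f : E → F | holderNorm α A f ≤ C} :=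
  lowerSemicontinuous_holderNorm.isClosed_preimage C

end HolderNorm

lemma exists_tendstoLocallyUniformly_of_edist_le {E β : Type*} [SeminormedAddCommGroup E]
    [EMetricSpace β] [CompleteSpace β] {F : ℕ → E → β} {δ : ℕ → ℝ≥0∞}
    (hδ : Tendsto δ atTop (𝓝 0))
    (hF : ∀ n k : ℕ, n ≤ k → ∀ x ∈ closedBall (0 : E) n, edist (F n x) (F k x) ≤ δ n) :
    ∃ g, TendstoLocallyUniformly F g atTop := by
  have hball {x : E} {n : ℕ} (hn : ⌈‖x‖⌉₊ ≤ n) : x ∈ closedBall (0 : E) n := by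
    simpa using (Nat.le_ceil ‖x‖).trans (Nat.cast_le.2 hn)
  have hsmall {ε : ℝ≥0∞} (hε : 0 < ε) (r : ℕ) : ∀ᶠ N in atTop, r ≤ N ∧ δ N < ε :=
    (eventually_ge_atTop r).and (hδ.eventually (gt_mem_nhds hε))
  have hcauchy (x : E) : CauchySeq (F · x) := by
    refine EMetric.cauchySeq_iff'.2 fun ε hε => ?_
    obtain ⟨N, hxN, hδN⟩ := (hsmall hε ⌈‖x‖⌉₊).exists
    exact ⟨N, fun k hk => by
      rw [edist_comm]; exact (hF N k hk x (hball hxN)).trans_lt hδN⟩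
  choose g hg using fun x => cauchySeq_tendsto_of_complete (hcauchy x)
  have hlim {n : ℕ} {x : E} (hx : x ∈ closedBall (0 : E) n) : edist (g x) (F n x) ≤ δ n := by
    rw [edist_comm]
    exact le_of_tendsto (tendsto_const_nhds.edist (hg x))
      ((eventually_ge_atTop n).mono fun k hk => hF n k hk x hx)
  refine ⟨g, tendstoLocallyUniformly_of_forall_exists_nhds fun x =>
    ⟨closedBall 0 (⌈‖x‖⌉₊ + 1), closedBall_mem_nhds_of_mem ?_, ?_⟩⟩
  · simpa using (Nat.le_ceil ‖x‖).trans_lt (lt_add_one _)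
  · refine EMetric.tendstoUniformlyOn_iff.2 fun ε hε => ?_
    filter_upwards [hsmall hε (⌈‖x‖⌉₊ + 1)] with N ⟨hN, hδN⟩ y hy
    refine (hlim (closedBall_subset_closedBall ?_ hy)).trans_lt hδN
    exact_mod_cast hN

lemma BaireSpace.of_nonempty_iInter {X : Type*} [TopologicalSpace X] (S : ℕ → Set (Set X))
    (hS : ∀ U, IsOpen U → U.Nonempty → ∀ n, ∃ V, IsOpen V ∧ V.Nonempty ∧ ∃ D ∈ S n, V ⊆ D ∧ D ⊆ U)
    (hnested : ∀ D : ℕ → Set X, Antitone D → (∀ n, D n ∈ S n) → (⋂ n, D n).Nonempty) :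
    BaireSpace X := by
  refine ⟨fun f hfo hfd => dense_iff_inter_open.2 fun U hU hUne => ?_⟩
  have step (n : ℕ) (W : {W : Set X // IsOpen W ∧ W.Nonempty}) :
      ∃ V : {V : Set X // IsOpen V ∧ V.Nonempty}, ∃ D ∈ S n, V.1 ⊆ D ∧ D ⊆ W.1 ∩ f n := by
    obtain ⟨V, hVo, hVne, D, hD, hVD, hDW⟩ :=
      hS _ (W.2.1.inter (hfo n)) ((hfd n).inter_open_nonempty _ W.2.1 W.2.2) n
    exact ⟨⟨V, hVo, hVne⟩, D, hD, hVD, hDW⟩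
  choose next D hD hVD hDW using step
  let W : ℕ → {W : Set X // IsOpen W ∧ W.Nonempty} := fun n => Nat.rec ⟨U, hU, hUne⟩ next n
  have hanti : Antitone fun n => D n (W n) :=
    antitone_nat_of_succ_le fun n => (hDW _ _).trans ((inter_subset_left).trans (hVD n (W n)))
  obtain ⟨x, hx⟩ := hnested _ hanti fun n => hD n (W n)
  have hxD := mem_iInter.1 hx
  exact ⟨x, (hDW 0 _ (hxD 0)).1, mem_iInter.2 fun n => (hDW n _ (hxD n)).2⟩

namespace HolderMap

variable {m d : ℕ} {α : ℝ} {T : Type}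

def strongBall (f : HolderMap m d α) (K : T → Set (Euc m)) (ε : T → ℝ≥0∞) :
    Set (HolderMap m d α) :=
  {g | ∀ t, holderNorm α (K t) (f.1 - g.1) < ε t}

def strongClosedBall (f : HolderMap m d α) (K : T → Set (Euc m)) (ε : T → ℝ≥0∞) :
    Set (HolderMap m d α) :=
  {g | ∀ t, holderNorm α (K t) (f.1 - g.1) ≤ ε t}

lemma strongBall_mem_strongBasic {f : HolderMap m d α} {K : T → Set (Euc m)} {ε : T → ℝ≥0∞}
    (hK : ∀ t, IsCompact (K t)) (hlf : LocallyFinite K) (hε : ∀ t, 0 < ε t) :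
    strongBall f K ε ∈ strongBasic m d α :=
  ⟨T, K, ε, f, hK, hlf, hε, rfl⟩

lemma mem_strongBall_self {f : HolderMap m d α} {K : T → Set (Euc m)} {ε : T → ℝ≥0∞}
    (hε : ∀ t, 0 < ε t) : f ∈ strongBall f K ε := fun t => by
  simpa [strongBall] using hε t

lemma strongBall_subset_strongClosedBall (f : HolderMap m d α) (K : T → Set (Euc m))
    (ε : T → ℝ≥0∞) : strongBall f K ε ⊆ strongClosedBall f K ε :=
  fun _ hg t => (hg t).le

/-- Here and below, `IsClosed` on `HolderMap m d α` refers to its instance topology, that of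
pointwise convergence; the strong topology is always written out as
`IsOpen[generateFrom (strongBasic m d α)]`. -/
lemma isClosed_strongClosedBall (f : HolderMap m d α) (K : T → Set (Euc m))
    (ε : T → ℝ≥0∞) : IsClosed (strongClosedBall f K ε) := by
  simp only [strongClosedBall, ofPred_forall]
  exact isClosed_iInter fun t => (isClosed_setOf_holderNorm_le (ε t)).preimage
    (continuous_const.sub continuous_subtype_val : Continuous fun g : HolderMap m d α => f.1 - g.1)

lemma exists_strongBall_subset_strongBall {f g : HolderMap m d α} {K : T → Set (Euc m)}
    {ε : T → ℝ≥0∞} (hg : g ∈ strongBall f K ε) :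
    ∃ ε' : T → ℝ≥0∞, (∀ t, 0 < ε' t) ∧ strongBall g K ε' ⊆ strongBall f K ε := by
  refine ⟨fun t => ε t - holderNorm α (K t) (f.1 - g.1), fun t => tsub_pos_of_lt (hg t),
    fun h hh t => ?_⟩
  calc holderNorm α (K t) (f.1 - h.1)
      ≤ holderNorm α (K t) (f.1 - g.1) + holderNorm α (K t) (g.1 - h.1) :=
        holderNorm_sub_le_add _ _ _
    _ < ε t := lt_tsub_iff_left.1 (hh t)

lemma exists_strongBall_subset_of_isOpen {U : Set (HolderMap m d α)}
    (hU : IsOpen[generateFrom (strongBasic m d α)] U) {f : HolderMap m d α} (hf : f ∈ U) :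
    ∃ (T : Type) (K : T → Set (Euc m)) (ε : T → ℝ≥0∞), (∀ t, IsCompact (K t)) ∧
      LocallyFinite K ∧ (∀ t, 0 < ε t) ∧ strongBall f K ε ⊆ U := by
  induction hU generalizing f with
  | basic S hS =>
    obtain ⟨T, K, ε, g, hK, hlf, -, rfl⟩ := hS
    obtain ⟨ε', hε', hsub⟩ := exists_strongBall_subset_strongBall hf
    exact ⟨T, K, ε', hK, hlf, hε', hsub⟩
  | univ =>
    exact ⟨Empty, Empty.elim, Empty.elim, nofun, locallyFinite_of_finite _, nofun,
      subset_univ _⟩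
  | inter U₁ U₂ _ _ ih₁ ih₂ =>
    obtain ⟨T₁, K₁, ε₁, hK₁, hlf₁, hε₁, hsub₁⟩ := ih₁ hf.1
    obtain ⟨T₂, K₂, ε₂, hK₂, hlf₂, hε₂, hsub₂⟩ := ih₂ hf.2
    exact ⟨T₁ ⊕ T₂, Sum.elim K₁ K₂, Sum.elim ε₁ ε₂, Sum.forall.2 ⟨hK₁, hK₂⟩,
      hlf₁.sumElim hlf₂, Sum.forall.2 ⟨hε₁, hε₂⟩,
      fun g hg => ⟨hsub₁ fun t => hg (.inl t), hsub₂ fun t => hg (.inr t)⟩⟩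
  | sUnion S _ ih =>
    obtain ⟨U, hUS, hfU⟩ := hf
    obtain ⟨T, K, ε, hK, hlf, hε, hsub⟩ := ih U hUS hfU
    exact ⟨T, K, ε, hK, hlf, hε, hsub.trans (subset_sUnion_of_mem hUS)⟩

lemma exists_tendsto_of_holderNorm_closedBall_le (c : ℕ → HolderMap m d α)
    (hc : ∀ n k : ℕ, n ≤ k →
      holderNorm α (closedBall 0 n) ((c n).1 - (c k).1) ≤ (n : ℝ≥0∞)⁻¹) :
    ∃ g : HolderMap m d α, Tendsto c atTop (𝓝 g) := by
  obtain ⟨g, hg⟩ := exists_tendstoLocallyUniformly_of_edist_le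
    (F := fun k => (c k).1) ENNReal.tendsto_inv_nat_nhds_zero fun n k hnk x hx =>
      (edist_le_supNormOn hx).trans ((supNormOn_le_holderNorm _).trans (hc n k hnk))
  have hlim : Tendsto (fun k => (c k).1) atTop (𝓝 g) :=
    tendsto_pi_nhds.2 fun x => hg.tendstoLocallyUniformlyOn.tendsto_at (mem_univ x)
  have hclose (n : ℕ) : holderNorm α (closedBall 0 n) ((c n).1 - g) ≤ (n : ℝ≥0∞)⁻¹ :=
    (isClosed_setOf_holderNorm_le _).mem_of_tendsto (tendsto_const_nhds.sub hlim)
      ((eventually_ge_atTop n).mono (hc n))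
  have hsemi (K : Set (Euc m)) (hK : IsCompact K) : holderSemi α K g < ⊤ := by
    obtain ⟨R, hR⟩ := hK.isBounded.subset_closedBall (0 : Euc m)
    set n := ⌈R⌉₊ + 1
    have hKn : K ⊆ closedBall 0 n :=
      hR.trans (closedBall_subset_closedBall ((Nat.le_ceil R).trans (by simp [n])))
    calc holderSemi α K g = holderSemi α K ((c n).1 - ((c n).1 - g)) := by rw [sub_sub_cancel]
      _ ≤ holderSemi α K (c n).1 + holderSemi α (closedBall 0 n) ((c n).1 - g) :=
        (holderSemi_sub_le _ _).trans (add_le_add le_rfl (holderSemi_mono hKn _))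
      _ < ⊤ := ENNReal.add_lt_top.2 ⟨(c n).2.2 K hK,
        ((holderSemi_le_holderNorm _).trans (hclose n)).trans_lt (by simp [n])⟩
  exact ⟨⟨g, hg.continuous (Frequently.of_forall fun k => (c k).2.1), hsemi⟩,
    tendsto_subtype_rng.2 hlim⟩

/-- At stage `0` the bound `(0 : ℝ≥0∞)⁻¹ = ⊤` is void. -/
def smallClosedSets (m d : ℕ) (α : ℝ) (n : ℕ) : Set (Set (HolderMap m d α)) :=
  {D | IsClosed D ∧ ∃ c ∈ D, ∀ g ∈ D, holderNorm α (closedBall 0 n) (c.1 - g.1) ≤ (n : ℝ≥0∞)⁻¹}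

lemma exists_smallClosedSets_between {U : Set (HolderMap m d α)}
    (hU : IsOpen[generateFrom (strongBasic m d α)] U) (hne : U.Nonempty) (n : ℕ) :
    ∃ V, IsOpen[generateFrom (strongBasic m d α)] V ∧ V.Nonempty ∧
      ∃ D ∈ smallClosedSets m d α n, V ⊆ D ∧ D ⊆ U := by
  obtain ⟨f, hf⟩ := hne
  obtain ⟨T, K, ε, hK, hlf, hε, hsub⟩ := exists_strongBall_subset_of_isOpen hU hf
  choose ε' hε'pos hε'lt using fun t => exists_between (hε t)
  set K' := Sum.elim K fun _ : Unit => closedBall (0 : Euc m) n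
  set ε'' := Sum.elim ε' fun _ : Unit => (n : ℝ≥0∞)⁻¹
  have hε''pos : ∀ t, 0 < ε'' t := Sum.forall.2 ⟨hε'pos, fun _ => by simp [ε'']⟩
  refine ⟨strongBall f K' ε'',
    isOpen_generateFrom_of_mem (strongBall_mem_strongBasic
      (Sum.forall.2 ⟨hK, fun _ => isCompact_closedBall _ _⟩)
      (hlf.sumElim (locallyFinite_of_finite _)) hε''pos),
    ⟨f, mem_strongBall_self hε''pos⟩, strongClosedBall f K' ε'',
    ⟨isClosed_strongClosedBall _ _ _, f, strongBall_subset_strongClosedBall _ _ _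
      (mem_strongBall_self hε''pos), fun g hg => hg (.inr ())⟩,
    strongBall_subset_strongClosedBall _ _ _, fun g hg => hsub fun t => ?_⟩
  exact (hg (.inl t)).trans_lt (hε'lt t)

lemma nonempty_iInter_of_smallClosedSets {D : ℕ → Set (HolderMap m d α)} (hD : Antitone D)
    (hsmall : ∀ n, D n ∈ smallClosedSets m d α n) : (⋂ n, D n).Nonempty := by
  choose hclosed c hcD hc using hsmall
  obtain ⟨g, hg⟩ := exists_tendsto_of_holderNorm_closedBall_le c
    fun n k hnk => hc n (c k) (hD hnk (hcD k))
  exact ⟨g, mem_iInter.2 fun n => (hclosed n).mem_of_tendsto hg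
    ((eventually_ge_atTop n).mono fun k hnk => hD hnk (hcD k))⟩

end HolderMap

theorem statement0_general (m d : ℕ) (α : ℝ) :
    @BaireSpace (HolderMap m d α) (generateFrom (strongBasic m d α)) :=
  @BaireSpace.of_nonempty_iInter _ (generateFrom _) (HolderMap.smallClosedSets m d α)
    (fun _ hU hne n => HolderMap.exists_smallClosedSets_between hU hne n)
    (fun _ hD hsmall => HolderMap.nonempty_iInter_of_smallClosedSets hD hsmall)

/-- the space of continuous maps `ℝ^m → ℝ^d` with locally finite `α`-Hölder
seminorm, endowed with the strong `α`-Hölder–Whitney topology, is a Baire space. -/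
theorem statement0 (m d : ℕ) (hm : 1 ≤ m) (hd : 1 ≤ d) (α : ℝ) (hα : α ∈ Set.Ioc (0:ℝ) 1) :
    @BaireSpace (HolderMap m d α) (generateFrom (strongBasic m d α)) :=
  statement0_general m d α
end
end

section
/- Let α ∈ (0,1], U ⊆ ℝ^m open, φ : U → ℝ^m a C^∞ diffeomorphism of U onto an open subset of ℝ^m, K ⊆ U compact, V ⊆ ℝ^d open, ψ : V → ℝ^d of class C^∞, and L ⊆ V compact and convex. Then for every B > 0 there exists κ > 0, depending only on α, B, φ, K, ψ and L, such that for all continuous maps g, g' : U → ℝ^d with g(K) ⊆ L, g'(K) ⊆ L, [g]_{α,K} ≤ B and [g']_{α,K} ≤ B: [ψ∘g∘φ^{-1} − ψ∘g'∘φ^{-1}]_{α, φ(K)} ≤ κ · ( ‖g − g'‖_{C⁰(K)} + [g − g']_{α,K} ). -/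
open Set
open scoped ENNReal

noncomputable section

/-- The `C^k`-seminorm of `h` over `A`, computed with derivatives taken within the (open)
set `s`: `[h]_{C^k,A} = max_{1≤j≤k} sup_{x∈A} ‖D^j h(x)‖`, valued in `[0,∞]`. -/
noncomputable def ckSemiOn {E F : Type*} [NormedAddCommGroup E] [NormedSpace ℝ E]
    [NormedAddCommGroup F] [NormedSpace ℝ F]
    (k : ℕ) (s A : Set E) (h : E → F) : ℝ≥0∞ :=
  ⨆ j ∈ Finset.Icc 1 k, ⨆ (x) (_ : x ∈ A),
    ENNReal.ofReal ‖iteratedFDerivWithin ℝ j h s x‖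

/-!
Put `Δ = g - g'`. Running the mean value inequality along the segments `[g b, g a]` and
`[g' b, g' a]` in parallel bounds `(ψ ∘ g - ψ ∘ g') a - (ψ ∘ g - ψ ∘ g') b` by
`‖Dψ‖ ‖Δ a - Δ b‖ + Lip(Dψ) sup ‖Δ‖ ‖g' a - g' b‖`; both terms are `O(‖a - b‖ ^ α)`, with
constants linear in `‖Δ‖_{C⁰}` and `[Δ]_α` once `[g']_α ≤ B`. Composing with `φ⁻¹`, which is
Lipschitz on the compact set `φ(K)`, only costs the factor `Lip(φ⁻¹) ^ α`.
-/

open scoped NNReal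

section HolderSemi

variable {E E' F : Type*} [NormedAddCommGroup E] [NormedAddCommGroup E']
  [NormedAddCommGroup F] {α : ℝ} {A : Set E} {f : E → F}

lemma norm_le_of_supNormOn_le {C : ℝ} (hC : 0 ≤ C) (h : supNormOn A f ≤ ENNReal.ofReal C)
    {x : E} (hx : x ∈ A) : ‖f x‖ ≤ C :=
  (ENNReal.ofReal_le_ofReal_iff hC).1 <|
    (le_iSup₂ (f := fun x (_ : x ∈ A) => ENNReal.ofReal ‖f x‖) x hx).trans h

lemma norm_sub_le_of_holderSemi_le {C : ℝ} (hC : 0 ≤ C)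
    (h : holderSemi α A f ≤ ENNReal.ofReal C) {x y : E} (hx : x ∈ A) (hy : y ∈ A) :
    ‖f x - f y‖ ≤ C * ‖x - y‖ ^ α := by
  rcases eq_or_ne x y with rfl | hxy
  · simpa using mul_nonneg hC (Real.rpow_nonneg le_rfl α)
  have hpos : 0 < ‖x - y‖ ^ α := Real.rpow_pos_of_pos (norm_pos_iff.2 (sub_ne_zero.2 hxy)) α
  have hxy' : ENNReal.ofReal (‖f x - f y‖ / ‖x - y‖ ^ α) ≤ holderSemi α A f :=
    le_iSup₂_of_le x hx <| le_iSup₂_of_le y hy <| le_iSup_of_le hxy le_rfl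
  exact (div_le_iff₀ hpos).1 <| (ENNReal.ofReal_le_ofReal_iff hC).1 (hxy'.trans h)

lemma holderSemi_le_ofReal {C : ℝ} (h : ∀ x ∈ A, ∀ y ∈ A, ‖f x - f y‖ ≤ C * ‖x - y‖ ^ α) :
    holderSemi α A f ≤ ENNReal.ofReal C :=
  iSup₂_le fun x hx => iSup₂_le fun y hy => iSup_le fun hxy => ENNReal.ofReal_le_ofReal <|
    (div_le_iff₀ (Real.rpow_pos_of_pos (norm_pos_iff.2 (sub_ne_zero.2 hxy)) α)).2
      (h x hx y hy)

lemma holderSemi_comp_le_of_lipschitzOnWith {A' : Set E'} {h : E' → E} {C : ℝ≥0}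
    (hh : LipschitzOnWith C h A') (hmaps : MapsTo h A' A) (hα : 0 ≤ α) {M : ℝ} (hM : 0 ≤ M)
    (hf : holderSemi α A f ≤ ENNReal.ofReal M) :
    holderSemi α A' (f ∘ h) ≤ ENNReal.ofReal (M * C ^ α) :=
  holderSemi_le_ofReal fun x hx y hy =>
    calc ‖f (h x) - f (h y)‖ ≤ M * ‖h x - h y‖ ^ α :=
          norm_sub_le_of_holderSemi_le hM hf (hmaps hx) (hmaps hy)
      _ ≤ M * (C * ‖x - y‖) ^ α := by gcongr; exact hh.norm_sub_le hx hy
      _ = M * C ^ α * ‖x - y‖ ^ α := by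
          rw [Real.mul_rpow C.coe_nonneg (norm_nonneg _), mul_assoc]

lemma holderSemi_comp_sub_comp_le {X : Type*} [NormedAddCommGroup X] {L : Set E} {C₁ C₂ : ℝ}
    (hC₁ : 0 ≤ C₁) (hC₂ : 0 ≤ C₂)
    (hf : ∀ p ∈ L, ∀ q ∈ L, ∀ p' ∈ L, ∀ q' ∈ L, ‖(f p - f p') - (f q - f q')‖ ≤
      C₁ * ‖(p - p') - (q - q')‖ + C₂ * max ‖p - p'‖ ‖q - q'‖ * ‖p' - q'‖)
    {K : Set X} {g g' : X → E} (hg : MapsTo g K L) (hg' : MapsTo g' K L) {B s t : ℝ}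
    (hB : 0 ≤ B) (hs : 0 ≤ s) (ht : 0 ≤ t) (hg'B : holderSemi α K g' ≤ ENNReal.ofReal B)
    (hΔs : supNormOn K (g - g') ≤ ENNReal.ofReal s)
    (hΔt : holderSemi α K (g - g') ≤ ENNReal.ofReal t) :
    holderSemi α K (f ∘ g - f ∘ g') ≤ ENNReal.ofReal (C₁ * t + C₂ * s * B) :=
  holderSemi_le_ofReal fun a ha b hb =>
    calc ‖(f (g a) - f (g' a)) - (f (g b) - f (g' b))‖
        ≤ C₁ * ‖(g a - g' a) - (g b - g' b)‖ +
            C₂ * max ‖g a - g' a‖ ‖g b - g' b‖ * ‖g' a - g' b‖ :=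
          hf _ (hg ha) _ (hg hb) _ (hg' ha) _ (hg' hb)
      _ ≤ C₁ * (t * ‖a - b‖ ^ α) + C₂ * s * (B * ‖a - b‖ ^ α) := by
          gcongr
          · exact norm_sub_le_of_holderSemi_le ht hΔt ha hb
          · exact max_le (norm_le_of_supNormOn_le hs hΔs ha) (norm_le_of_supNormOn_le hs hΔs hb)
          · exact norm_sub_le_of_holderSemi_le hB hg'B ha hb
      _ = (C₁ * t + C₂ * s * B) * ‖a - b‖ ^ α := by ring

end HolderSemi

section ContDiff

variable {E F : Type*} [NormedAddCommGroup E] [NormedSpace ℝ E]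
  [NormedAddCommGroup F] [NormedSpace ℝ F]

/-- Mean value inequality along `[q, p]` and `[q', p']` traversed in parallel by `c` and `c'`:
the derivative of `t ↦ f (c t) - f (c' t)` splits as `Df(c t)` applied to the difference of the
two directions plus `Df(c t) - Df(c' t)` applied to `p' - q'`. -/
theorem Convex.norm_sub_sub_sub_le_of_lipschitzOnWith_fderiv {f : E → F} {L : Set E}
    (hL : Convex ℝ L) (hf : ∀ z ∈ L, DifferentiableAt ℝ f z) {C₁ : ℝ} {C₂ : ℝ≥0}
    (hC₁ : ∀ z ∈ L, ‖fderiv ℝ f z‖ ≤ C₁) (hC₂ : LipschitzOnWith C₂ (fderiv ℝ f) L)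
    {p q p' q' : E} (hp : p ∈ L) (hq : q ∈ L) (hp' : p' ∈ L) (hq' : q' ∈ L) :
    ‖(f p - f p') - (f q - f q')‖ ≤
      C₁ * ‖(p - p') - (q - q')‖ + C₂ * max ‖p - p'‖ ‖q - q'‖ * ‖p' - q'‖ := by
  set c := AffineMap.lineMap (k := ℝ) q p
  set c' := AffineMap.lineMap (k := ℝ) q' p'
  have hc : ∀ t ∈ Icc (0 : ℝ) 1, c t ∈ L := fun t ht => hL.lineMap_mem hq hp ht
  have hc' : ∀ t ∈ Icc (0 : ℝ) 1, c' t ∈ L := fun t ht => hL.lineMap_mem hq' hp' ht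
  have hderiv : ∀ t ∈ Icc (0 : ℝ) 1, HasDerivWithinAt (fun t => f (c t) - f (c' t))
      (fderiv ℝ f (c t) (p - q) - fderiv ℝ f (c' t) (p' - q')) (Icc 0 1) t := fun t ht =>
    (((hf _ (hc t ht)).hasFDerivAt.comp_hasDerivAt t AffineMap.hasDerivAt_lineMap).sub
      ((hf _ (hc' t ht)).hasFDerivAt.comp_hasDerivAt t
        AffineMap.hasDerivAt_lineMap)).hasDerivWithinAt
  have hbound : ∀ t ∈ Ico (0 : ℝ) 1,
      ‖fderiv ℝ f (c t) (p - q) - fderiv ℝ f (c' t) (p' - q')‖ ≤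
        C₁ * ‖(p - p') - (q - q')‖ + C₂ * max ‖p - p'‖ ‖q - q'‖ * ‖p' - q'‖ := by
    intro t ht
    have ht' : t ∈ Icc (0 : ℝ) 1 := ⟨ht.1, ht.2.le⟩
    have hcc' : ‖c t - c' t‖ ≤ max ‖p - p'‖ ‖q - q'‖ := by
      have heq : c t - c' t = AffineMap.lineMap (q - q') (p - p') t := by
        simp only [c, c', AffineMap.lineMap_apply_module]; module
      rw [heq, ← mem_closedBall_zero_iff]
      exact (convex_closedBall 0 _).lineMap_mem (by simp) (by simp) ht'
    calc ‖fderiv ℝ f (c t) (p - q) - fderiv ℝ f (c' t) (p' - q')‖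
        = ‖fderiv ℝ f (c t) ((p - p') - (q - q')) +
            (fderiv ℝ f (c t) - fderiv ℝ f (c' t)) (p' - q')‖ := by
          congr 1; simp only [map_sub, sub_apply]; abel
      _ ≤ ‖fderiv ℝ f (c t)‖ * ‖(p - p') - (q - q')‖ +
            ‖fderiv ℝ f (c t) - fderiv ℝ f (c' t)‖ * ‖p' - q'‖ :=
          norm_add_le_of_le (ContinuousLinearMap.le_opNorm _ _)
            (ContinuousLinearMap.le_opNorm _ _)
      _ ≤ C₁ * ‖(p - p') - (q - q')‖ + C₂ * ‖c t - c' t‖ * ‖p' - q'‖ := by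
          gcongr
          · exact hC₁ _ (hc t ht')
          · exact hC₂.norm_sub_le (hc t ht') (hc' t ht')
      _ ≤ C₁ * ‖(p - p') - (q - q')‖ + C₂ * max ‖p - p'‖ ‖q - q'‖ * ‖p' - q'‖ := by
          gcongr
  simpa [c, c'] using norm_image_sub_le_of_norm_deriv_le_segment_01' hderiv hbound

theorem ContDiffOn.exists_norm_sub_sub_sub_le {f : E → F} {V L : Set E}
    (hf : ContDiffOn ℝ 2 f V) (hV : IsOpen V) (hL : IsCompact L) (hLconv : Convex ℝ L)
    (hLV : L ⊆ V) :
    ∃ C₁ > 0, ∃ C₂ : ℝ≥0, ∀ p ∈ L, ∀ q ∈ L, ∀ p' ∈ L, ∀ q' ∈ L,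
      ‖(f p - f p') - (f q - f q')‖ ≤
        C₁ * ‖(p - p') - (q - q')‖ + C₂ * max ‖p - p'‖ ‖q - q'‖ * ‖p' - q'‖ := by
  obtain ⟨C₁, hC₁, hDf⟩ := (hL.image_of_continuousOn
    ((hf.continuousOn_fderiv_of_isOpen hV one_le_two).mono hLV)).isBounded.exists_pos_norm_le
  obtain ⟨C₂, hC₂⟩ :=
    ((hf.fderiv_of_isOpen hV le_rfl).mono hLV).exists_lipschitzOnWith one_ne_zero hLconv hL
  exact ⟨C₁, hC₁, C₂, fun p hp q hq p' hp' q' hq' =>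
    hLconv.norm_sub_sub_sub_le_of_lipschitzOnWith_fderiv
      (fun z hz => (hf.contDiffAt (hV.mem_nhds (hLV hz))).differentiableAt two_ne_zero)
      (fun z hz => hDf _ (mem_image_of_mem _ hz)) hC₂ hp hq hp' hq'⟩

theorem ContDiffOn.exists_lipschitzOnWith_of_isCompact_subset {f : E → F} {W A : Set E}
    (hf : ContDiffOn ℝ 1 f W) (hW : IsOpen W) (hA : IsCompact A) (hAW : A ⊆ W) :
    ∃ C, LipschitzOnWith C f A :=
  LocallyLipschitzOn.exists_lipschitzOnWith_of_compact hA fun _ hx =>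
    (hf.contDiffAt (hW.mem_nhds (hAW hx))).exists_lipschitzOnWith.imp
      fun _ ⟨t, ht, hlip⟩ => ⟨t, mem_nhdsWithin_of_mem_nhds ht, hlip⟩

end ContDiff

theorem statement13_general (m d : ℕ) (α : ℝ) (hα : α ∈ Set.Ioc (0:ℝ) 1)
    (U : Set (Euc m))
    (φ φinv : Euc m → Euc m)
    (hφ : ContDiffOn ℝ (⊤ : ℕ∞) φ U)
    (hImg : IsOpen (φ '' U))
    (hφinv : ContDiffOn ℝ (⊤ : ℕ∞) φinv (φ '' U))
    (hleft : ∀ x ∈ U, φinv (φ x) = x)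
    (K : Set (Euc m)) (hK : IsCompact K) (hKU : K ⊆ U)
    (V : Set (Euc d)) (hV : IsOpen V)
    (ψ : Euc d → Euc d) (hψ : ContDiffOn ℝ (⊤ : ℕ∞) ψ V)
    (L : Set (Euc d)) (hL : IsCompact L) (hLconv : Convex ℝ L) (hLV : L ⊆ V) :
    ∀ B : ℝ, 0 < B → ∃ κ : ℝ, 0 < κ ∧
      ∀ g g' : Euc m → Euc d, ContinuousOn g U → ContinuousOn g' U →
        g '' K ⊆ L → g' '' K ⊆ L →
        holderSemi α K g ≤ ENNReal.ofReal B → holderSemi α K g' ≤ ENNReal.ofReal B →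
        holderSemi α (φ '' K) (ψ ∘ g ∘ φinv - ψ ∘ g' ∘ φinv)
          ≤ ENNReal.ofReal κ * (supNormOn K (g - g') + holderSemi α K (g - g')) := by
  intro B hB
  obtain ⟨C₁, hC₁, C₂, hψL⟩ :=
    (hψ.of_le (WithTop.coe_le_coe.2 le_top)).exists_norm_sub_sub_sub_le hV hL hLconv hLV
  obtain ⟨C₃, hC₃⟩ :=
    (hφinv.of_le (WithTop.coe_le_coe.2 le_top)).exists_lipschitzOnWith_of_isCompact_subset hImg
      (hK.image_of_continuousOn (hφ.continuousOn.mono hKU)) (image_mono hKU)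
  have hmaps : MapsTo φinv (φ '' K) K := by
    rintro _ ⟨a, ha, rfl⟩
    rwa [hleft a (hKU ha)]
  have hκ : 0 < (C₁ + B * C₂) * (C₃ ^ α + 1) := by positivity
  refine ⟨_, hκ, fun g g' _ _ hgL hg'L _ hg'B => ?_⟩
  set S := supNormOn K (g - g')
  set H := holderSemi α K (g - g')
  rcases eq_or_ne (S + H) ⊤ with htop | hfin
  · simp [htop, ENNReal.mul_top, hκ]
  obtain ⟨hS, hH⟩ := ENNReal.add_ne_top.1 hfin
  have hs := ENNReal.toReal_nonneg (a := S)
  have ht := ENNReal.toReal_nonneg (a := H)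
  calc holderSemi α (φ '' K) (ψ ∘ g ∘ φinv - ψ ∘ g' ∘ φinv)
      = holderSemi α (φ '' K) ((ψ ∘ g - ψ ∘ g') ∘ φinv) := rfl
    _ ≤ ENNReal.ofReal ((C₁ * H.toReal + C₂ * S.toReal * B) * C₃ ^ α) :=
        holderSemi_comp_le_of_lipschitzOnWith hC₃ hmaps hα.1.le (by positivity) <|
          holderSemi_comp_sub_comp_le hC₁.le C₂.coe_nonneg hψL (mapsTo_iff_image_subset.2 hgL)
            (mapsTo_iff_image_subset.2 hg'L) hB.le hs ht hg'B (ENNReal.ofReal_toReal hS).ge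
            (ENNReal.ofReal_toReal hH).ge
    _ ≤ ENNReal.ofReal ((C₁ + B * C₂) * (S.toReal + H.toReal) * (C₃ ^ α + 1)) := by
        gcongr ENNReal.ofReal (?_ * ?_)
        · nlinarith [mul_nonneg hC₁.le hs, mul_nonneg (mul_nonneg hB.le C₂.coe_nonneg) ht]
        · exact le_add_of_nonneg_right zero_le_one
    _ = ENNReal.ofReal ((C₁ + B * C₂) * (C₃ ^ α + 1)) * (S + H) := by
        rw [mul_right_comm, ENNReal.ofReal_mul hκ.le, ENNReal.ofReal_add hs ht,
          ENNReal.ofReal_toReal hS, ENNReal.ofReal_toReal hH]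

/-- let `φ` be a `C^∞` diffeomorphism of the open set `U ⊆ ℝ^m` onto its
(open) image with smooth inverse `φinv`, `K ⊆ U` compact, `ψ : V → ℝ^d` of class `C^∞` on
the open set `V ⊆ ℝ^d`, and `L ⊆ V` compact and convex.  For every `B > 0` there is
`κ > 0` (depending only on `α`, `B`, `φ`, `K`, `ψ`, `L`) such that for all continuous
`g, g'` on `U` with `g(K), g'(K) ⊆ L` and `α`-Hölder seminorms at most `B` on `K`:
`[ψ∘g∘φ⁻¹ − ψ∘g'∘φ⁻¹]_{α,φ(K)} ≤ κ ( ‖g − g'‖_{C⁰(K)} + [g − g']_{α,K} )`. -/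
theorem statement13 (m d : ℕ) (α : ℝ) (hα : α ∈ Set.Ioc (0:ℝ) 1)
    (U : Set (Euc m)) (hU : IsOpen U)
    (φ φinv : Euc m → Euc m)
    (hφ : ContDiffOn ℝ (⊤ : ℕ∞) φ U)
    (hImg : IsOpen (φ '' U))
    (hφinv : ContDiffOn ℝ (⊤ : ℕ∞) φinv (φ '' U))
    (hleft : ∀ x ∈ U, φinv (φ x) = x)
    (K : Set (Euc m)) (hK : IsCompact K) (hKU : K ⊆ U)
    (V : Set (Euc d)) (hV : IsOpen V)
    (ψ : Euc d → Euc d) (hψ : ContDiffOn ℝ (⊤ : ℕ∞) ψ V)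
    (L : Set (Euc d)) (hL : IsCompact L) (hLconv : Convex ℝ L) (hLV : L ⊆ V) :
    ∀ B : ℝ, 0 < B → ∃ κ : ℝ, 0 < κ ∧
      ∀ g g' : Euc m → Euc d, ContinuousOn g U → ContinuousOn g' U →
        g '' K ⊆ L → g' '' K ⊆ L →
        holderSemi α K g ≤ ENNReal.ofReal B → holderSemi α K g' ≤ ENNReal.ofReal B →
        holderSemi α (φ '' K) (ψ ∘ g ∘ φinv - ψ ∘ g' ∘ φinv)
          ≤ ENNReal.ofReal κ * (supNormOn K (g - g') + holderSemi α K (g - g')) :=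
  statement13_general m d α hα U φ φinv hφ hImg hφinv hleft K hK hKU V hV ψ hψ L hL hLconv hLV
end
end

section
/- Let p ∈ [1,∞), let U, U' ⊆ ℝ^m be open, let φ : U' → U be a C¹ diffeomorphism, and let K ⊆ U be compact (so φ^{-1}(K) ⊆ U' is compact). Then for all maps g, g' : U → ℝ^d of class C¹: (∫_{φ^{-1}(K)} ‖D(g∘φ)(x) − D(g'∘φ)(x)‖^p dμ(x))^{1/p} ≤ (sup_{x ∈ φ^{-1}(K)} ‖Dφ(x)‖) · (inf_{x ∈ φ^{-1}(K)} |det Dφ(x)|)^{-1/p} · (∫_K ‖Dg(y) − Dg'(y)‖^p dμ(y))^{1/p}. -/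
/-!
By the chain rule, `D(g ∘ φ)(x) - D(g' ∘ φ)(x) = (Dg - Dg')(φ x) ∘ Dφ(x)`, so with
`C = sup ‖Dφ‖` and `c = inf |det Dφ|` on `K' = φ⁻¹(K)` the integrand on the left is at most
`C^p ‖(Dg - Dg')(φ x)‖^p ≤ (C^p / c) |det Dφ(x)| ‖(Dg - Dg')(φ x)‖^p`. Integrating over `K'`
and changing variables `y = φ x` turns the right-hand side into `(C^p / c) ∫_K ‖Dg - Dg'‖^p`.
On the compact set `K'` the supremum and infimum are attained, and `c > 0` because `φ` has a
differentiable left inverse.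
-/

open Set MeasureTheory
open scoped ENNReal

noncomputable section

section Calculus

variable {𝕜 E F G : Type*} [NontriviallyNormedField 𝕜]
  [NormedAddCommGroup E] [NormedSpace 𝕜 E] [NormedAddCommGroup F] [NormedSpace 𝕜 F]
  [NormedAddCommGroup G] [NormedSpace 𝕜 G] {s : Set E} {t : Set F} {x : E}

theorem fderivWithin_comp_sub_fderivWithin_comp {f : E → F} {g g' : F → G}
    (hg : DifferentiableWithinAt 𝕜 g t (f x)) (hg' : DifferentiableWithinAt 𝕜 g' t (f x))
    (hf : DifferentiableWithinAt 𝕜 f s x) (hst : MapsTo f s t) (hs : UniqueDiffWithinAt 𝕜 s x) :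
    fderivWithin 𝕜 (g ∘ f) s x - fderivWithin 𝕜 (g' ∘ f) s x
      = (fderivWithin 𝕜 g t (f x) - fderivWithin 𝕜 g' t (f x)).comp (fderivWithin 𝕜 f s x) := by
  rw [fderivWithin_comp x hg hf hst hs, fderivWithin_comp x hg' hf hst hs,
    ContinuousLinearMap.sub_comp]

theorem det_fderivWithin_ne_zero_of_leftInvOn {f g : E → E} {t : Set E}
    (hg : DifferentiableWithinAt 𝕜 g t (f x)) (hf : DifferentiableWithinAt 𝕜 f s x)
    (hst : MapsTo f s t) (hgf : LeftInvOn g f s) (hs : UniqueDiffWithinAt 𝕜 s x)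
    (hx : x ∈ s) : (fderivWithin 𝕜 f s x).det ≠ 0 := by
  have hcomp : (fderivWithin 𝕜 g t (f x)).comp (fderivWithin 𝕜 f s x)
      = ContinuousLinearMap.id 𝕜 E := by
    rw [← fderivWithin_comp x hg hf hst hs, fderivWithin_congr' hgf.eqOn hx,
      fderivWithin_id hs]
  refine right_ne_zero_of_mul_eq_one (a := (fderivWithin 𝕜 g t (f x)).det) ?_
  simpa [ContinuousLinearMap.det, ContinuousLinearMap.coe_comp, LinearMap.det_comp] using
    congrArg ContinuousLinearMap.det hcomp

end Calculus

section ChangeOfVariables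

variable {E F : Type*} [NormedAddCommGroup E] [NormedSpace ℝ E]
  [NormedAddCommGroup F] [NormedSpace ℝ F]

theorem ContinuousLinearMap.norm_comp_rpow_le {p C c : ℝ} (hp : 0 < p) (hc : 0 < c)
    (A : E →L[ℝ] E) (B : E →L[ℝ] F) (hA : ‖A‖ ≤ C) (hdet : c ≤ |A.det|) :
    ‖B.comp A‖ ^ p ≤ (C * c ^ (-(1 / p))) ^ p * (|A.det| * ‖B‖ ^ p) := by
  have hC : 0 ≤ C := (norm_nonneg A).trans hA
  have hconst : (C * c ^ (-(1 / p))) ^ p = C ^ p * c⁻¹ := by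
    rw [Real.mul_rpow hC (by positivity), ← Real.rpow_mul hc.le, neg_mul, one_div,
      inv_mul_cancel₀ hp.ne', Real.rpow_neg_one]
  have hdet' : 1 ≤ c⁻¹ * |A.det| := by rw [inv_mul_eq_div, one_le_div hc]; exact hdet
  calc ‖B.comp A‖ ^ p ≤ (‖B‖ * C) ^ p := by
        gcongr
        exact (B.opNorm_comp_le A).trans (by gcongr)
    _ = C ^ p * ‖B‖ ^ p := by rw [Real.mul_rpow (norm_nonneg B) hC, mul_comm]
    _ ≤ C ^ p * (c⁻¹ * |A.det|) * ‖B‖ ^ p := by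
        gcongr
        exact le_mul_of_one_le_right (by positivity) hdet'
    _ = _ := by rw [hconst]; ring

theorem ContinuousLinearMap.enorm_comp_rpow_le {p C c : ℝ} (hp : 0 < p) (hc : 0 < c)
    (A : E →L[ℝ] E) (B : E →L[ℝ] F) (hA : ‖A‖ ≤ C) (hdet : c ≤ |A.det|) :
    ‖B.comp A‖ₑ ^ p
      ≤ ENNReal.ofReal (C * c ^ (-(1 / p))) ^ p * (ENNReal.ofReal |A.det| * ‖B‖ₑ ^ p) := by
  have hC : 0 ≤ C := (norm_nonneg A).trans hA
  rw [← ofReal_norm, ← ofReal_norm, ENNReal.ofReal_rpow_of_nonneg (norm_nonneg _) hp.le,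
    ENNReal.ofReal_rpow_of_nonneg (norm_nonneg _) hp.le,
    ENNReal.ofReal_rpow_of_nonneg (by positivity) hp.le, ← ENNReal.ofReal_mul (abs_nonneg _),
    ← ENNReal.ofReal_mul (by positivity)]
  exact ENNReal.ofReal_le_ofReal (A.norm_comp_rpow_le hp hc B hA hdet)

variable [FiniteDimensional ℝ E] [MeasurableSpace E] [BorelSpace E]
  (μ : Measure E) [μ.IsAddHaarMeasure] {p : ℝ} {s : Set E} {f : E → E} {f' : E → E →L[ℝ] E}

theorem lintegral_enorm_comp_fderiv_rpow_le {C c : ℝ} (hp : 0 < p) (hc : 0 < c)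
    (hs : MeasurableSet s) (hf' : ∀ x ∈ s, HasFDerivWithinAt f (f' x) s x) (hf : InjOn f s)
    (hC : ∀ x ∈ s, ‖f' x‖ ≤ C) (hdet : ∀ x ∈ s, c ≤ |(f' x).det|) (B : E → E →L[ℝ] F) :
    (∫⁻ x in s, ‖(B (f x)).comp (f' x)‖ₑ ^ p ∂μ) ^ (1 / p)
      ≤ ENNReal.ofReal (C * c ^ (-(1 / p))) * (∫⁻ y in f '' s, ‖B y‖ₑ ^ p ∂μ) ^ (1 / p) := by
  set L := ENNReal.ofReal (C * c ^ (-(1 / p)))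
  have hint : ∫⁻ x in s, ‖(B (f x)).comp (f' x)‖ₑ ^ p ∂μ
      ≤ L ^ p * ∫⁻ y in f '' s, ‖B y‖ₑ ^ p ∂μ := calc
    _ ≤ ∫⁻ x in s, L ^ p * (ENNReal.ofReal |(f' x).det| * ‖B (f x)‖ₑ ^ p) ∂μ :=
        setLIntegral_mono' hs fun x hx ↦
          (f' x).enorm_comp_rpow_le hp hc (B (f x)) (hC x hx) (hdet x hx)
    _ = L ^ p * ∫⁻ x in s, ENNReal.ofReal |(f' x).det| * ‖B (f x)‖ₑ ^ p ∂μ :=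
        lintegral_const_mul' _ _ (ENNReal.rpow_ne_top_of_nonneg hp.le ENNReal.ofReal_ne_top)
    _ = L ^ p * ∫⁻ y in f '' s, ‖B y‖ₑ ^ p ∂μ := by
        rw [lintegral_image_eq_lintegral_abs_det_fderiv_mul μ hs hf' hf]
  calc _ ≤ (L ^ p * ∫⁻ y in f '' s, ‖B y‖ₑ ^ p ∂μ) ^ (1 / p) :=
        ENNReal.rpow_le_rpow hint (by positivity)
    _ = _ := by
        rw [ENNReal.mul_rpow_of_nonneg _ _ (by positivity), ← ENNReal.rpow_mul,
          mul_one_div_cancel hp.ne', ENNReal.rpow_one]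

theorem lintegral_enorm_comp_fderiv_rpow_le_of_isCompact (hp : 0 < p) (hs : IsCompact s)
    (hf' : ∀ x ∈ s, HasFDerivWithinAt f (f' x) s x) (hf'c : ContinuousOn f' s)
    (hdet : ∀ x ∈ s, (f' x).det ≠ 0) (hf : InjOn f s) (B : E → E →L[ℝ] F) :
    (∫⁻ x in s, ‖(B (f x)).comp (f' x)‖ₑ ^ p ∂μ) ^ (1 / p)
      ≤ ENNReal.ofReal ((⨆ x : s, ‖f' x‖) * (⨅ x : s, |(f' x).det|) ^ (-(1 / p)))
        * (∫⁻ y in f '' s, ‖B y‖ₑ ^ p ∂μ) ^ (1 / p) := by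
  rcases s.eq_empty_or_nonempty with rfl | hne
  · simp [hp]
  obtain ⟨xM, hxM, hmax⟩ := hs.exists_isMaxOn hne hf'c.norm
  obtain ⟨xm, hxm, hmin⟩ : ∃ xm ∈ s, IsMinOn (fun x ↦ |(f' x).det|) s xm := hs.exists_isMinOn hne
    (ContinuousLinearMap.continuous_det.comp_continuousOn hf'c).abs
  rw [hmax.iSup_eq hxM, hmin.iInf_eq hxm]
  exact lintegral_enorm_comp_fderiv_rpow_le μ hp (abs_pos.2 (hdet xm hxm)) hs.measurableSet hf'
    hf hmax hmin B

end ChangeOfVariables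

theorem statement16_general (m d : ℕ) (p : ℝ) (hp : 1 ≤ p)
    (U U' : Set (Euc m)) (hU' : IsOpen U')
    (φ φinv : Euc m → Euc m)
    (hφ : ContDiffOn ℝ 1 φ U') (hφinv : ContDiffOn ℝ 1 φinv U)
    (hto : ∀ x ∈ U', φ x ∈ U ∧ φinv (φ x) = x)
    (hfrom : ∀ y ∈ U, φinv y ∈ U' ∧ φ (φinv y) = y)
    (K : Set (Euc m)) (hK : IsCompact K) (hKU : K ⊆ U)
    (K' : Set (Euc m)) (hK' : K' = U' ∩ φ ⁻¹' K)
    (g g' : Euc m → Euc d)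
    (hg : ContDiffOn ℝ 1 g U) (hg' : ContDiffOn ℝ 1 g' U) :
    (∫⁻ x in K',
        (‖fderivWithin ℝ (g ∘ φ) U' x - fderivWithin ℝ (g' ∘ φ) U' x‖₊ : ℝ≥0∞) ^ p)
        ^ (1 / p)
      ≤ ENNReal.ofReal ((⨆ x : K', ‖fderivWithin ℝ φ U' x‖)
            * (⨅ x : K', |(fderivWithin ℝ φ U' (x : Euc m)).det|) ^ (-(1 / p)))
        * (∫⁻ y in K,
            (‖fderivWithin ℝ g U y - fderivWithin ℝ g' U y‖₊ : ℝ≥0∞) ^ p) ^ (1 / p) := by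
  have hmaps : MapsTo φ U' U := fun x hx ↦ (hto x hx).1
  have hinv : InvOn φinv φ U' U := ⟨fun x hx ↦ (hto x hx).2, fun y hy ↦ (hfrom y hy).2⟩
  obtain rfl : K' = φinv '' K := by
    rw [hK', inter_comm, ← (hinv.symm.bijOn (fun y hy ↦ (hfrom y hy).1) hmaps).image_eq,
      ← hinv.2.image_inter', inter_eq_left.2 hKU]
  have hK'U' : φinv '' K ⊆ U' := image_subset_iff.2 fun y hy ↦ (hfrom y (hKU hy)).1
  have hφd := hφ.differentiableOn one_ne_zero
  have hchain : ∀ x ∈ φinv '' K,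
      fderivWithin ℝ (g ∘ φ) U' x - fderivWithin ℝ (g' ∘ φ) U' x
        = (fderivWithin ℝ g U (φ x) - fderivWithin ℝ g' U (φ x)).comp (fderivWithin ℝ φ U' x) :=
    fun x hx ↦ fderivWithin_comp_sub_fderivWithin_comp
      (hg.differentiableOn one_ne_zero _ (hmaps (hK'U' hx)))
      (hg'.differentiableOn one_ne_zero _ (hmaps (hK'U' hx)))
      (hφd x (hK'U' hx)) hmaps (hU'.uniqueDiffWithinAt (hK'U' hx))
  have hK'cpt : IsCompact (φinv '' K) := hK.image_of_continuousOn (hφinv.continuousOn.mono hKU)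
  rw [setLIntegral_congr_fun hK'cpt.measurableSet fun x hx ↦ by rw [hchain x hx]]
  have hbound := lintegral_enorm_comp_fderiv_rpow_le_of_isCompact volume (by linarith) hK'cpt
    (fun x hx ↦ (hφd x (hK'U' hx)).hasFDerivWithinAt.mono hK'U')
    ((hφ.continuousOn_fderivWithin hU'.uniqueDiffOn le_rfl).mono hK'U')
    (fun x hx ↦ det_fderivWithin_ne_zero_of_leftInvOn
      (hφinv.differentiableOn one_ne_zero _ (hmaps (hK'U' hx))) (hφd x (hK'U' hx)) hmaps hinv.1
      (hU'.uniqueDiffWithinAt (hK'U' hx)) (hK'U' hx))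
    (hinv.1.injOn.mono hK'U') (fun y ↦ fderivWithin ℝ g U y - fderivWithin ℝ g' U y)
  rwa [hinv.2.image_image' hKU] at hbound

/-- let `p ∈ [1,∞)`, `φ : U' → U` a `C¹` diffeomorphism between open subsets
of `ℝ^m` (with `C¹` inverse `φinv`), and `K ⊆ U` compact, `K' = φ⁻¹(K)`.  Then for all
`C¹` maps `g, g' : U → ℝ^d`:
`(∫_{K'} ‖D(g∘φ) − D(g'∘φ)‖^p dμ)^{1/p}
  ≤ (sup_{K'} ‖Dφ‖) (inf_{K'} |det Dφ|)^{−1/p} (∫_K ‖Dg − Dg'‖^p dμ)^{1/p}`,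
where `μ` is Lebesgue measure. -/
theorem statement16 (m d : ℕ) (p : ℝ) (hp : 1 ≤ p)
    (U U' : Set (Euc m)) (hU : IsOpen U) (hU' : IsOpen U')
    (φ φinv : Euc m → Euc m)
    (hφ : ContDiffOn ℝ 1 φ U') (hφinv : ContDiffOn ℝ 1 φinv U)
    (hto : ∀ x ∈ U', φ x ∈ U ∧ φinv (φ x) = x)
    (hfrom : ∀ y ∈ U, φinv y ∈ U' ∧ φ (φinv y) = y)
    (K : Set (Euc m)) (hK : IsCompact K) (hKU : K ⊆ U)
    (K' : Set (Euc m)) (hK' : K' = U' ∩ φ ⁻¹' K)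
    (g g' : Euc m → Euc d)
    (hg : ContDiffOn ℝ 1 g U) (hg' : ContDiffOn ℝ 1 g' U) :
    (∫⁻ x in K',
        (‖fderivWithin ℝ (g ∘ φ) U' x - fderivWithin ℝ (g' ∘ φ) U' x‖₊ : ℝ≥0∞) ^ p)
        ^ (1 / p)
      ≤ ENNReal.ofReal ((⨆ x : K', ‖fderivWithin ℝ φ U' x‖)
            * (⨅ x : K', |(fderivWithin ℝ φ U' (x : Euc m)).det|) ^ (-(1 / p)))
        * (∫⁻ y in K,
            (‖fderivWithin ℝ g U y - fderivWithin ℝ g' U y‖₊ : ℝ≥0∞) ^ p) ^ (1 / p) :=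
  statement16_general m d p hp U U' hU' φ φinv hφ hφinv hto hfrom K hK hKU K' hK' g g' hg hg'
end
end
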